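/- Let T be a finite tree in which all vertices of degree ≥ 3 are pairwise at even distance (bipartite ramification structure). Then f(T) = (number of leaves of T) − 2, provided T has at least one vertex of degree ≥ 3. -/

import Mathlib

open Classical

/-- Degree of a vertex. -/
noncomputable def deg {V : Type*} (G : SimpleGraph V) (v : V) : ℕ :=
  Nat.card {u // G.Adj v u}

/-- A set of edges is flattening if deleting them leaves max degree ≤ 2. -/
def Flattening {V : Type*} (G : SimpleGraph V) (F : Set (Sym2 V)) : Prop :=
  F ⊆ G.edgeSet ∧ ∀ v, deg (G.deleteEdges F) v ≤ 2

/-- The flattening number: minimal size of a flattening edge set. -/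
noncomputable def flatNum {V : Type*} [Fintype V] (G : SimpleGraph V) : ℕ :=
  sInf {n | ∃ F : Finset (Sym2 V), Flattening G ↑F ∧ F.card = n}

/-! Vertices of degree at least 3 are pairwise at even distance, hence pairwise non-adjacent.
So no edge is incident to two of them, and a flattening set must contain `deg v - 2` edges at
each such vertex `v`, all distinct; removing any `deg v - 2` edges at each of them suffices.
Thus `f(T) = ∑ v, (deg v - 2)` with truncated subtraction, and in a tree the handshake lemma
gives `∑ v, (deg v - 2) = 2 (n - 1) - 2 n = -2` over `ℤ`, i.e. the truncated sum is the number
of leaves minus 2. -/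

open Finset

namespace SimpleGraph

variable {V : Type*} (G : SimpleGraph V)

lemma deg_eq_degree (v : V) [Fintype (G.neighborSet v)] : deg G v = G.degree v :=
  (Nat.card_eq_fintype_card (α := G.neighborSet v)).trans (G.card_neighborSet_eq_degree v)

lemma isIndepSet_of_pairwise_even_dist {S : Set V} (h : S.Pairwise fun u v ↦ Even (G.dist u v)) :
    G.IsIndepSet S :=
  h.imp fun u v heven hadj ↦ by simp [dist_eq_one_iff_adj.mpr hadj] at heven

variable [DecidableEq V]

lemma deg_eq_card_incidenceFinset (v : V) [Fintype (G.neighborSet v)] :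
    deg G v = #(G.incidenceFinset v) := by
  rw [card_incidenceFinset_eq_degree, deg_eq_degree]

lemma incidenceFinset_deleteEdges (F : Finset (Sym2 V)) (v : V) [Fintype (G.neighborSet v)]
    [Fintype ((G.deleteEdges F).neighborSet v)] :
    (G.deleteEdges F).incidenceFinset v = G.incidenceFinset v \ F := by
  ext e
  simp [incidenceSet, edgeSet_deleteEdges, and_right_comm]

variable [Fintype V]

lemma deg_deleteEdges_add_card_inter (F : Finset (Sym2 V)) (v : V) :
    deg (G.deleteEdges F) v + #(G.incidenceFinset v ∩ F) = deg G v := by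
  rw [deg_eq_card_incidenceFinset, deg_eq_card_incidenceFinset, incidenceFinset_deleteEdges,
    card_sdiff_add_card_inter]

lemma sum_deg_sub_two_le_card_of_flattening (hB : G.IsIndepSet {v | 3 ≤ deg G v})
    {F : Finset (Sym2 V)} (hF : Flattening G F) : ∑ v, (deg G v - 2) ≤ #F := by
  set B : Finset V := {v | 3 ≤ deg G v}
  have hdisj : (B : Set V).PairwiseDisjoint fun v ↦ G.incidenceFinset v ∩ F := by
    intro u hu w hw huw
    refine Finset.disjoint_left.mpr fun e heu hew ↦ ?_
    simp only [B, coe_filter, mem_univ, true_and] at hu hw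
    simp only [mem_inter, mem_incidenceFinset] at heu hew
    exact hB hu hw huw (G.adj_of_mem_incidenceSet huw heu.1 hew.1)
  calc ∑ v, (deg G v - 2) = ∑ v ∈ B, (deg G v - 2) :=
        (sum_filter_of_ne fun v _ h ↦ by omega).symm
    _ ≤ ∑ v ∈ B, #(G.incidenceFinset v ∩ F) :=
        sum_le_sum fun v _ ↦ by
          have := G.deg_deleteEdges_add_card_inter F v
          have := hF.2 v
          omega
    _ = #(B.biUnion fun v ↦ G.incidenceFinset v ∩ F) := (card_biUnion hdisj).symm
    _ ≤ #F := card_le_card (biUnion_subset.mpr fun v _ ↦ inter_subset_right)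

lemma exists_flattening_card_eq_sum_deg_sub_two (hB : G.IsIndepSet {v | 3 ≤ deg G v}) :
    ∃ F : Finset (Sym2 V), Flattening G F ∧ #F = ∑ v, (deg G v - 2) := by
  have hchoice v : ∃ E ⊆ G.incidenceFinset v, #E = deg G v - 2 :=
    exists_subset_card_eq (by rw [← deg_eq_card_incidenceFinset]; omega)
  choose E hEinc hEcard using hchoice
  have hbranch v (hv : (E v).Nonempty) : 3 ≤ deg G v := by
    have := card_pos.mpr hv
    have := hEcard v
    omega
  have hdisj : ((univ : Finset V) : Set V).PairwiseDisjoint E := by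
    intro u _ w _ huw
    exact Finset.disjoint_left.mpr fun e heu hew ↦
      hB (hbranch u ⟨e, heu⟩) (hbranch w ⟨e, hew⟩) huw <| G.adj_of_mem_incidenceSet huw
        (mem_incidenceFinset .. |>.mp (hEinc u heu)) (mem_incidenceFinset .. |>.mp (hEinc w hew))
  refine ⟨univ.biUnion E, ⟨?_, fun v ↦ ?_⟩, ?_⟩
  · intro e he
    obtain ⟨v, -, hev⟩ := mem_biUnion.mp he
    exact G.incidenceSet_subset v (mem_incidenceFinset .. |>.mp (hEinc v hev))
  · have hsub : E v ⊆ G.incidenceFinset v ∩ univ.biUnion E :=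
      subset_inter (hEinc v) (subset_biUnion_of_mem E (mem_univ v))
    have := card_le_card hsub
    have := hEcard v
    have := G.deg_deleteEdges_add_card_inter (univ.biUnion E) v
    omega
  · rw [card_biUnion hdisj]
    exact sum_congr rfl fun v _ ↦ hEcard v

lemma flatNum_eq_sum_deg_sub_two (hB : G.IsIndepSet {v | 3 ≤ deg G v}) :
    flatNum G = ∑ v, (deg G v - 2) := by
  obtain ⟨F, hF, hcard⟩ := G.exists_flattening_card_eq_sum_deg_sub_two hB
  refine IsLeast.csInf_eq ⟨⟨F, hF, hcard⟩, ?_⟩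
  rintro _ ⟨F', hF', rfl⟩
  exact G.sum_deg_sub_two_le_card_of_flattening hB hF'

omit [DecidableEq V] in
lemma IsTree.sum_degree_sub_two [DecidableRel G.Adj] (hT : G.IsTree) :
    ∑ v, (G.degree v - 2) = #{v | G.degree v = 1} - 2 := by
  rcases subsingleton_or_nontrivial V with _ | _
  · simp
  have hpos v : 0 < G.degree v := hT.connected.preconnected.degree_pos_of_nontrivial v
  have hpointwise v : G.degree v - 2 + 2 = G.degree v + if G.degree v = 1 then 1 else 0 := by
    have := hpos v
    split_ifs <;> omega
  have hsum := sum_congr rfl fun v (_ : v ∈ univ) ↦ hpointwise v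
  rw [sum_add_distrib, sum_add_distrib, sum_const, ← card_filter, sum_degrees_eq_twice_card_edges,
    card_univ, ← hT.card_edgeFinset, smul_eq_mul] at hsum
  omega

end SimpleGraph

theorem flatNum_bipartite_ramification_general {V : Type*} [Fintype V] (G : SimpleGraph V)
    (hT : G.IsTree)
    (heven : ∀ u v : V, 3 ≤ deg G u → 3 ≤ deg G v → Even (G.dist u v)) :
    flatNum G = Nat.card {v : V // deg G v = 1} - 2 := by
  have hB : G.IsIndepSet {v | 3 ≤ deg G v} :=
    G.isIndepSet_of_pairwise_even_dist fun u hu v hv _ ↦ heven u v hu hv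
  rw [G.flatNum_eq_sum_deg_sub_two hB, Nat.card_eq_fintype_card, Fintype.card_subtype]
  simp only [SimpleGraph.deg_eq_degree]
  exact hT.sum_degree_sub_two

theorem flatNum_bipartite_ramification {V : Type*} [Fintype V] (G : SimpleGraph V)
    (hT : G.IsTree) (hbr : ∃ v, 3 ≤ deg G v)
    (heven : ∀ u v : V, 3 ≤ deg G u → 3 ≤ deg G v → Even (G.dist u v)) :
    flatNum G = Nat.card {v : V // deg G v = 1} - 2 :=
  flatNum_bipartite_ramification_general G hT heven
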